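/- Let s, c, ε, y₀ be real numbers with s > 0, suppose (1 − (1+ε)/s)² − 4c/s > 0, set Υ = √((1 − (1+ε)/s)² − 4c/s), assume |2y₀ − (1 − (1+ε)/s)| < Υ, and define T̃(t) = ½(1 − (1+ε)/s) + (Υ/2)·tanh((sΥ/2)·t + arctanh((2y₀ − (1 − (1+ε)/s))/Υ)). Then T̃(0) = y₀ and T̃ satisfies T̃′(t) = (s − (1+ε))·T̃(t) − s·T̃(t)² − c for all t ∈ ℝ. -/

import Mathlib

/-!
The centred and rescaled function `u = (2T̃ - A)/Υ`, with `A = 1 - (1+ε)/s`, is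
`tanh((sΥ/2) t + φ)`, so it solves `u' = (sΥ/2)(1 - u²)`. Since `Υ² = A² - 4c/s`, completing
the square turns `(s - (1+ε)) y - s y² - c = s (A y - y²) - c` into `s ((Υ/2)² - (y - A/2)²)`,
which is exactly this equation rewritten for `T̃`. The phase `φ = arctanh((2y₀ - A)/Υ)` makes
`u(0) = (2y₀ - A)/Υ`, i.e. `T̃(0) = y₀`.
-/

noncomputable def arctanh (x : ℝ) : ℝ := (1 / 2) * Real.log ((1 + x) / (1 - x))

open Real Set

lemma arctanh_eq_artanh {x : ℝ} (hx : x ∈ Icc (-1) 1) : arctanh x = artanh x :=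
  (artanh_eq_half_log hx).symm

lemma tanh_arctanh {x : ℝ} (hx : |x| < 1) : tanh (arctanh x) = x := by
  have hx' : x ∈ Ioo (-1) 1 := abs_lt.mp hx
  rw [arctanh_eq_artanh (Ioo_subset_Icc_self hx'), tanh_artanh hx']

lemma hasDerivAt_tanh (x : ℝ) : HasDerivAt tanh (1 - tanh x ^ 2) x := by
  have hcosh : cosh x ≠ 0 := (cosh_pos x).ne'
  have hquot := (hasDerivAt_sinh x).div (hasDerivAt_cosh x) hcosh
  rw [show sinh / cosh = tanh from funext fun y => (tanh_eq_sinh_div_cosh y).symm] at hquot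
  refine hquot.congr_deriv ?_
  rw [tanh_eq_sinh_div_cosh]
  field_simp

lemma hasDerivAt_const_add_mul_tanh (m r k φ t : ℝ) :
    HasDerivAt (fun t => m + r * tanh (k * t + φ)) (k * r * (1 - tanh (k * t + φ) ^ 2)) t := by
  have hlin : HasDerivAt (fun t => k * t + φ) k t := by
    simpa using ((hasDerivAt_id t).const_mul k).add_const φ
  refine (((hasDerivAt_tanh (k * t + φ)).comp t hlin).const_mul r |>.const_add m).congr_deriv ?_
  ring

theorem epsilon_tanh_formula_solves_riccati_general (s c ε y₀ Υ : ℝ) (hs : 0 < s)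
    (hΥ : Υ = Real.sqrt ((1 - (1 + ε) / s) ^ 2 - 4 * c / s))
    (hy₀ : |2 * y₀ - (1 - (1 + ε) / s)| < Υ)
    (T : ℝ → ℝ)
    (hT : ∀ t, T t = (1 / 2) * (1 - (1 + ε) / s) +
      (Υ / 2) * Real.tanh ((s * Υ / 2) * t +
        arctanh ((2 * y₀ - (1 - (1 + ε) / s)) / Υ))) :
    T 0 = y₀ ∧ ∀ t, HasDerivAt T ((s - (1 + ε)) * T t - s * (T t) ^ 2 - c) t := by
  set A := 1 - (1 + ε) / s with hA
  have hsA : s * A = s - (1 + ε) := by rw [hA]; field_simp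
  have hΥpos : 0 < Υ := (abs_nonneg _).trans_lt hy₀
  have hΥsq : Υ ^ 2 = A ^ 2 - 4 * c / s := by
    rw [hΥ, sq_sqrt (sqrt_pos.mp (hΥ ▸ hΥpos)).le]
  have hphase : |(2 * y₀ - A) / Υ| < 1 := by
    rwa [abs_div, abs_of_pos hΥpos, div_lt_one hΥpos]
  have hsΥsq : s * Υ ^ 2 = s * A ^ 2 - 4 * c := by rw [hΥsq]; field_simp
  clear_value A
  refine ⟨?_, fun t => ?_⟩
  · rw [hT, mul_zero, zero_add, tanh_arctanh hphase]
    field_simp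
    ring
  · rw [funext hT]
    convert hasDerivAt_const_add_mul_tanh (1 / 2 * A) (Υ / 2) (s * Υ / 2)
      (arctanh ((2 * y₀ - A) / Υ)) t using 1
    rw [← hsA]
    linear_combination (-1 / 4) * hsΥsq

/-- The ε-SIS tanh-formula
`T̃(t) = ½(1 - (1+ε)/s) + (Υ/2) tanh((sΥ/2)t + arctanh((2y₀ - (1 - (1+ε)/s))/Υ))`
satisfies `T̃(0) = y₀` and `T̃' = (s - (1+ε))T̃ - sT̃² - c`. -/
theorem epsilon_tanh_formula_solves_riccati (s c ε y₀ Υ : ℝ) (hs : 0 < s)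
    (hdisc : 0 < (1 - (1 + ε) / s) ^ 2 - 4 * c / s)
    (hΥ : Υ = Real.sqrt ((1 - (1 + ε) / s) ^ 2 - 4 * c / s))
    (hy₀ : |2 * y₀ - (1 - (1 + ε) / s)| < Υ)
    (T : ℝ → ℝ)
    (hT : ∀ t, T t = (1 / 2) * (1 - (1 + ε) / s) +
      (Υ / 2) * Real.tanh ((s * Υ / 2) * t +
        arctanh ((2 * y₀ - (1 - (1 + ε) / s)) / Υ))) :
    T 0 = y₀ ∧ ∀ t, HasDerivAt T ((s - (1 + ε)) * T t - s * (T t) ^ 2 - c) t :=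
  epsilon_tanh_formula_solves_riccati_general s c ε y₀ Υ hs hΥ hy₀ T hT
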